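/- arXiv:2309.09706 — 3 statements merged into one kernel-verified Lean document; each statement's English description precedes it below -/
import Mathlib

section
/- Let −π < θ_m < θ_M < π with 0 < θ_M − θ_m < π, and let K = {(r cos θ, r sin θ) ∈ ℝ² : r > 0, θ_m < θ < θ_M}. Then for every s > 0, the (Lebesgue) integral over the sector of the CGO solution satisfies ∫_K exp(−s√(x₁ + i x₂)) dx = 6 i (e^{−2iθ_M} − e^{−2iθ_m}) s^{−4}. -/
/-!
In polar coordinates `z = r e^{iθ}` with `θ ∈ (-π, π)`, the principal root is `√z = √r e^{iθ/2}`,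
so with `w(θ) = s e^{iθ/2}` the integral becomes `∫_{θm}^{θM} ∫_0^∞ r e^{-w(θ) √r} dr dθ`.
Since `Re w(θ) = s cos (θ/2)` is bounded below by a positive constant on the sector, Fubini applies,
and the substitution `r = t²` turns the inner integral into the Laplace transform
`2 ∫_0^∞ t³ e^{-w t} dt = 12 / w(θ)⁴ = 12 s⁻⁴ e^{-2iθ}`. Integrating `e^{-2iθ}` over `(θm, θM)`
gives the result.
-/

open MeasureTheory Set Filter Topology Complex
open scoped Nat

lemma norm_ofReal_pow_mul_cexp_neg_mul (n : ℕ) (w : ℂ) {r : ℝ} (hr : 0 ≤ r) (x : ℝ) :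
    ‖(r : ℂ) ^ n * cexp (-(w * x))‖ = r ^ n * Real.exp (-(w.re * x)) := by
  rw [norm_mul, norm_pow, norm_real, Real.norm_of_nonneg hr, norm_exp]
  simp

lemma integrableOn_pow_mul_cexp_neg_mul (n : ℕ) {w : ℂ} (hw : 0 < w.re) :
    IntegrableOn (fun t : ℝ => (t : ℂ) ^ n * cexp (-(w * t))) (Ioi 0) := by
  refine Integrable.mono' (integrableOn_rpow_mul_exp_neg_mul_rpow (s := n) (p := 1)
    (by linarith [n.cast_nonneg (α := ℝ)]) one_pos hw) (by fun_prop) ?_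
  filter_upwards [ae_restrict_mem measurableSet_Ioi] with t ht
  rw [norm_ofReal_pow_mul_cexp_neg_mul n w (le_of_lt ht), Real.rpow_natCast, Real.rpow_one, neg_mul]

lemma tendsto_pow_mul_cexp_neg_mul_atTop (n : ℕ) {w : ℂ} (hw : 0 < w.re) :
    Tendsto (fun t : ℝ => (t : ℂ) ^ n * cexp (-(w * t))) atTop (𝓝 0) := by
  rw [tendsto_zero_iff_norm_tendsto_zero]
  refine (tendsto_rpow_mul_exp_neg_mul_atTop_nhds_zero n w.re hw).congr' ?_
  filter_upwards [eventually_ge_atTop 0] with t ht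
  rw [norm_ofReal_pow_mul_cexp_neg_mul n w ht, Real.rpow_natCast, neg_mul]

theorem integral_pow_mul_cexp_neg_mul (n : ℕ) {w : ℂ} (hw : 0 < w.re) :
    ∫ t in Ioi (0 : ℝ), (t : ℂ) ^ n * cexp (-(w * t)) = n ! / w ^ (n + 1) := by
  have hw0 : w ≠ 0 := fun h => by simp [h] at hw
  induction n with
  | zero =>
    simpa [neg_mul] using integral_exp_mul_complex_Ioi (a := -w) (by simpa using hw) 0
  | succ n ih =>
    have hu : ∀ t ∈ Ioi (0 : ℝ), HasDerivAt (fun t : ℝ => (t : ℂ) ^ (n + 1))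
        ((n + 1 : ℂ) * (t : ℂ) ^ n) t := fun t _ => by
      simpa using (hasDerivAt_id (t : ℂ)).pow (n + 1) |>.comp_ofReal
    have hv : ∀ t ∈ Ioi (0 : ℝ), HasDerivAt (fun t : ℝ => -cexp (-(w * t)) / w)
        (cexp (-(w * t))) t := fun t _ => by
      have hexp : HasDerivAt (fun t : ℝ => cexp (-(w * t))) (cexp (-(w * t)) * -w) t := by
        simpa using ((hasDerivAt_id (t : ℂ)).const_mul w).neg.cexp.comp_ofReal
      exact (hexp.neg.div_const w).congr_deriv (by field_simp)
    have huv_zero : Tendsto (fun t : ℝ => (t : ℂ) ^ (n + 1) * (-cexp (-(w * t)) / w))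
        (𝓝[>] 0) (𝓝 0) := by
      have hcont : Continuous (fun t : ℝ => (t : ℂ) ^ (n + 1) * (-cexp (-(w * t)) / w)) := by
        fun_prop
      simpa using (hcont.tendsto 0).mono_left nhdsWithin_le_nhds
    have huv_top : Tendsto (fun t : ℝ => (t : ℂ) ^ (n + 1) * (-cexp (-(w * t)) / w))
        atTop (𝓝 0) := by
      simpa [mul_div_assoc'] using ((tendsto_pow_mul_cexp_neg_mul_atTop (n + 1) hw).neg.div_const w)
    have hu'v : IntegrableOn (fun t : ℝ => (n + 1 : ℂ) * (t : ℂ) ^ n * (-cexp (-(w * t)) / w))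
        (Ioi 0) := by
      refine IntegrableOn.congr_fun ((integrableOn_pow_mul_cexp_neg_mul n hw).const_mul
        (-(n + 1) / w)) (fun t _ => ?_) measurableSet_Ioi
      ring
    rw [integral_Ioi_mul_deriv_eq_deriv_mul hu hv (integrableOn_pow_mul_cexp_neg_mul (n + 1) hw)
      hu'v huv_zero huv_top]
    have hscale : ∀ t : ℝ, (n + 1 : ℂ) * (t : ℂ) ^ n * (-cexp (-(w * t)) / w)
        = -((n + 1) / w) * ((t : ℂ) ^ n * cexp (-(w * t))) := fun t => by ring
    simp_rw [hscale, integral_const_mul, ih, Nat.factorial_succ]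
    push_cast
    field_simp
    ring

lemma rpow_two_smul_pow_mul_cexp_neg_mul_sqrt (n : ℕ) (w : ℂ) :
    EqOn (fun x : ℝ => (|(2 : ℝ)| * x ^ ((2 : ℝ) - 1)) •
        (((x ^ (2 : ℝ) : ℝ) : ℂ) ^ n * cexp (-(w * √(x ^ (2 : ℝ))))))
      (fun x : ℝ => 2 * ((x : ℂ) ^ (2 * n + 1) * cexp (-(w * x)))) (Ioi 0) := by
  intro x hx
  have hsq : x ^ (2 : ℝ) = x ^ 2 := Real.rpow_two x
  simp only [hsq, Real.sqrt_sq (le_of_lt hx), show (2 : ℝ) - 1 = 1 by norm_num, Real.rpow_one,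
    abs_two, real_smul]
  push_cast
  ring

lemma integrableOn_pow_mul_cexp_neg_mul_sqrt (n : ℕ) {w : ℂ} (hw : 0 < w.re) :
    IntegrableOn (fun r : ℝ => (r : ℂ) ^ n * cexp (-(w * √r))) (Ioi 0) := by
  rw [← integrableOn_Ioi_comp_rpow_iff _ two_ne_zero]
  exact IntegrableOn.congr_fun ((integrableOn_pow_mul_cexp_neg_mul _ hw).const_mul 2)
    (rpow_two_smul_pow_mul_cexp_neg_mul_sqrt n w).symm measurableSet_Ioi

theorem integral_pow_mul_cexp_neg_mul_sqrt (n : ℕ) {w : ℂ} (hw : 0 < w.re) :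
    ∫ r in Ioi (0 : ℝ), (r : ℂ) ^ n * cexp (-(w * √r)) = 2 * (2 * n + 1)! / w ^ (2 * n + 2) := by
  rw [← integral_comp_rpow_Ioi _ two_ne_zero,
    setIntegral_congr_fun measurableSet_Ioi (rpow_two_smul_pow_mul_cexp_neg_mul_sqrt n w),
    integral_const_mul, integral_pow_mul_cexp_neg_mul _ hw]
  ring

theorem integrable_pow_mul_cexp_neg_mul_sqrt_prod (n : ℕ) {a b c : ℝ} (hc : 0 < c) {w : ℝ → ℂ}
    (hw_cont : Continuous w) (hw : ∀ θ ∈ Ioo a b, c ≤ (w θ).re) :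
    Integrable (fun p : ℝ × ℝ => (p.1 : ℂ) ^ n * cexp (-(w p.2 * √p.1)))
      ((volume.restrict (Ioi 0)).prod (volume.restrict (Ioo a b))) := by
  have hdom : Integrable (fun p : ℝ × ℝ => ‖(p.1 : ℂ) ^ n * cexp (-(c * √p.1))‖ * 1)
      ((volume.restrict (Ioi 0)).prod (volume.restrict (Ioo a b))) :=
    (integrableOn_pow_mul_cexp_neg_mul_sqrt n (w := c) (by simpa using hc)).norm.mul_prod
      (integrable_const 1)
  refine hdom.mono' (by fun_prop) ?_
  rw [Measure.prod_restrict]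
  filter_upwards [ae_restrict_mem (measurableSet_Ioi.prod measurableSet_Ioo)]
    with p ⟨(hr : 0 < p.1), hθ⟩
  rw [mul_one, norm_ofReal_pow_mul_cexp_neg_mul n _ (le_of_lt hr),
    norm_ofReal_pow_mul_cexp_neg_mul n _ (le_of_lt hr), ofReal_re]
  gcongr
  exact hw p.2 hθ

theorem integral_image_polarCoord_symm {E : Type*} [NormedAddCommGroup E] [NormedSpace ℝ E]
    {T : Set (ℝ × ℝ)} (hT : MeasurableSet T) (hT_target : T ⊆ polarCoord.target)
    (f : ℝ × ℝ → E) :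
    ∫ x in polarCoord.symm '' T, f x = ∫ p in T, p.1 • f (polarCoord.symm p) := by
  rw [integral_image_eq_integral_abs_det_fderiv_smul volume hT
    (fun p _ => (hasFDerivAt_polarCoord_symm p).hasFDerivWithinAt)
    (polarCoord.symm.injOn.mono hT_target)]
  refine setIntegral_congr_fun hT fun p hp => ?_
  rw [det_fderivPolarCoordSymm, abs_of_pos (hT_target hp).1]

lemma setOf_polar_eq_image_polarCoord_symm (a b : ℝ) :
    {x : ℝ × ℝ | ∃ r θ : ℝ, 0 < r ∧ a < θ ∧ θ < b ∧ x = (r * Real.cos θ, r * Real.sin θ)}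
      = polarCoord.symm '' (Ioi 0 ×ˢ Ioo a b) := by
  ext x
  simp [polarCoord_symm_apply, eq_comm, and_assoc]

theorem ofReal_mul_cexp_mul_I_cpow {r θ : ℝ} (hr : 0 < r) (hθ : θ ∈ Ioc (-Real.pi) Real.pi)
    (c : ℂ) : ((r : ℂ) * cexp (θ * I)) ^ c = (r : ℂ) ^ c * cexp (θ * c * I) := by
  have hpolar : (r : ℂ) * cexp (θ * I) = cexp (Real.log r + θ * I) := by
    rw [exp_add, ← ofReal_exp, Real.exp_log hr]
  rw [hpolar, cpow_def_of_ne_zero (exp_ne_zero _),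
    log_exp (by simpa using hθ.1) (by simpa using hθ.2),
    cpow_def_of_ne_zero (ofReal_ne_zero.mpr hr.ne'), ← ofReal_log hr.le, ← exp_add]
  ring_nf

lemma cpow_half_polarCoord_symm {p : ℝ × ℝ} (hp : p ∈ polarCoord.target) :
    (((polarCoord.symm p).1 : ℂ) + ((polarCoord.symm p).2 : ℂ) * I) ^ (1 / 2 : ℂ)
      = √p.1 * cexp (p.2 / 2 * I) := by
  have hp1 : 0 < p.1 := hp.1
  have hz : ((polarCoord.symm p).1 : ℂ) + ((polarCoord.symm p).2 : ℂ) * I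
      = (p.1 : ℂ) * cexp (p.2 * I) := by
    rw [polarCoord_symm_apply, exp_mul_I]
    push_cast
    ring
  rw [hz, ofReal_mul_cexp_mul_I_cpow hp1 ⟨hp.2.1, hp.2.2.le⟩, Real.sqrt_eq_rpow,
    ofReal_cpow hp1.le]
  push_cast
  ring_nf

lemma exists_pos_le_cos_half {a b : ℝ} (ha : -Real.pi < a) (hb : b < Real.pi) (hab : a < b) :
    ∃ c > 0, ∀ θ ∈ Ioo a b, c ≤ Real.cos (θ / 2) := by
  set M := max (-a) b
  have hM_lt : M < Real.pi := max_lt (by linarith) hb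
  have hM_gt : -Real.pi < M := by linarith [le_max_right (-a) b]
  refine ⟨Real.cos (M / 2), Real.cos_pos_of_mem_Ioo ⟨by linarith, by linarith⟩, fun θ hθ => ?_⟩
  have hθM : |θ| ≤ M := abs_le.mpr
    ⟨by linarith [hθ.1, le_max_left (-a) b], by linarith [hθ.2, le_max_right (-a) b]⟩
  calc Real.cos (M / 2) ≤ Real.cos (|θ| / 2) :=
        Real.cos_le_cos_of_nonneg_of_le_pi (by positivity) (by linarith) (by linarith)
    _ = Real.cos (θ / 2) := by rw [← Real.cos_abs (θ / 2), abs_div, abs_two]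

lemma re_ofReal_mul_cexp_half_mul_I (s θ : ℝ) :
    ((s : ℂ) * cexp (θ / 2 * I)).re = s * Real.cos (θ / 2) := by
  simp [← ofReal_ofNat, ← ofReal_div]

lemma integral_radial_cgo {s θ : ℝ} (hs : 0 < s) (hθ : θ ∈ Ioo (-Real.pi) Real.pi) :
    ∫ r : ℝ in Ioi 0, (r : ℂ) * cexp (-(s * cexp (θ / 2 * I) * √r))
      = 12 / (s : ℂ) ^ 4 * cexp (-2 * I * θ) := by
  have hre : 0 < ((s : ℂ) * cexp (θ / 2 * I)).re := by
    rw [re_ofReal_mul_cexp_half_mul_I]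
    exact mul_pos hs (Real.cos_pos_of_mem_Ioo ⟨by linarith [hθ.1], by linarith [hθ.2]⟩)
  have hpow : ((s : ℂ) * cexp (θ / 2 * I)) ^ 4 = s ^ 4 * cexp (2 * θ * I) := by
    rw [mul_pow, ← exp_nat_mul]
    ring_nf
  have h := integral_pow_mul_cexp_neg_mul_sqrt 1 hre
  simp only [pow_one, Nat.reduceMul, Nat.reduceAdd] at h
  rw [h, hpow, show -2 * I * θ = -(2 * θ * I) by ring, exp_neg]
  norm_num [Nat.factorial]
  field_simp

lemma integrable_polar_cgo {a b s : ℝ} (ha : -Real.pi < a) (hb : b < Real.pi) (hab : a < b)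
    (hs : 0 < s) :
    Integrable (fun p : ℝ × ℝ => (p.1 : ℂ) * cexp (-(s * cexp (p.2 / 2 * I) * √p.1)))
      ((volume.restrict (Ioi 0)).prod (volume.restrict (Ioo a b))) := by
  obtain ⟨c, hc, hcos⟩ := exists_pos_le_cos_half ha hb hab
  simpa using integrable_pow_mul_cexp_neg_mul_sqrt_prod 1 (mul_pos hs hc)
    (w := fun θ => s * cexp (θ / 2 * I)) (by fun_prop) fun θ hθ => by
      rw [re_ofReal_mul_cexp_half_mul_I]
      exact mul_le_mul_of_nonneg_left (hcos θ hθ) hs.le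

theorem sector_integral_cgo_general (θm θM : ℝ) (hθm : -Real.pi < θm) (hθM : θM < Real.pi)
    (hlt : 0 < θM - θm) (s : ℝ) (hs : 0 < s) :
    ∫ x : ℝ × ℝ in {x : ℝ × ℝ | ∃ r θ : ℝ, 0 < r ∧ θm < θ ∧ θ < θM ∧
        x = (r * Real.cos θ, r * Real.sin θ)},
      Complex.exp (-(s : ℂ) * ((x.1 : ℂ) + (x.2 : ℂ) * Complex.I) ^ (1/2 : ℂ))
      = 6 * Complex.I *
        (Complex.exp (-2 * (θM : ℂ) * Complex.I) - Complex.exp (-2 * (θm : ℂ) * Complex.I)) /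
        (s : ℂ) ^ 4 := by
  have hT : Ioi (0 : ℝ) ×ˢ Ioo θm θM ⊆ polarCoord.target :=
    prod_mono subset_rfl (Ioo_subset_Ioo hθm.le hθM.le)
  have hT_meas : MeasurableSet (Ioi (0 : ℝ) ×ˢ Ioo θm θM) :=
    measurableSet_Ioi.prod measurableSet_Ioo
  calc _ = ∫ p : ℝ × ℝ in Ioi 0 ×ˢ Ioo θm θM,
        (p.1 : ℂ) * cexp (-(s * cexp (p.2 / 2 * I) * √p.1)) := by
        rw [setOf_polar_eq_image_polarCoord_symm, integral_image_polarCoord_symm hT_meas hT]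
        refine setIntegral_congr_fun hT_meas fun p hp => ?_
        rw [cpow_half_polarCoord_symm (hT hp), real_smul]
        ring_nf
    _ = ∫ θ in Ioo θm θM, ∫ r : ℝ in Ioi 0, (r : ℂ) * cexp (-(s * cexp (θ / 2 * I) * √r)) := by
        rw [Measure.volume_eq_prod, ← Measure.prod_restrict]
        exact integral_prod_symm _ (integrable_polar_cgo hθm hθM (by linarith) hs)
    _ = ∫ θ in Ioo θm θM, 12 / (s : ℂ) ^ 4 * cexp (-2 * I * θ) :=
        setIntegral_congr_fun measurableSet_Ioo fun θ hθ =>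
          integral_radial_cgo hs ⟨by linarith [hθ.1], by linarith [hθ.2]⟩
    _ = _ := by
        rw [integral_const_mul, ← integral_Ioc_eq_integral_Ioo,
          ← intervalIntegral.integral_of_le (by linarith), integral_exp_mul_complex (by simp)]
        simp only [mul_right_comm _ I]
        field_simp
        ring_nf
        simp [I_sq]

/-- the sector integral of the CGO solution `exp(-s √z)`,
`z = x₁ + i x₂` (principal branch square root), equals
`6 i (e^{-2iθ_M} - e^{-2iθ_m}) s^{-4}`. -/
theorem sector_integral_cgo (θm θM : ℝ) (hθm : -Real.pi < θm) (hθM : θM < Real.pi)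
    (hlt : 0 < θM - θm) (hopen : θM - θm < Real.pi) (s : ℝ) (hs : 0 < s) :
    ∫ x : ℝ × ℝ in {x : ℝ × ℝ | ∃ r θ : ℝ, 0 < r ∧ θm < θ ∧ θ < θM ∧
        x = (r * Real.cos θ, r * Real.sin θ)},
      Complex.exp (-(s : ℂ) * ((x.1 : ℂ) + (x.2 : ℂ) * Complex.I) ^ (1/2 : ℂ))
      = 6 * Complex.I *
        (Complex.exp (-2 * (θM : ℂ) * Complex.I) - Complex.exp (-2 * (θm : ℂ) * Complex.I)) /
        (s : ℂ) ^ 4 :=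
  sector_integral_cgo_general θm θM hθm hθM hlt s hs
end

section
/- Let −π < θ_m < θ_M < π with 0 < θ_M − θ_m < π, and let K = {(r cos θ, r sin θ) ∈ ℝ² : r > 0, θ_m < θ < θ_M}. Then for every s > 0, h > 0 and α > 0, ∫_K |exp(−s√(x₁ + i x₂))| · |x|^α dx ≤ 2 (θ_M − θ_m) Γ(2α + 4) δ_K^{−(2α+4)} s^{−(2α+4)}, where δ_K = min_{θ_m ≤ θ ≤ θ_M} cos(θ/2) > 0 and Γ is the Gamma function. -/
/-! In polar coordinates `z = r e^{iθ}` one has `Re √z = √r cos (θ / 2) ≥ δ_K √r`, so the integrand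
times the Jacobian `r` is at most `r ^ (α + 1) e^{-s δ_K √r}`. The substitution `r = t²` turns the
radial integral into `2 Γ(2α + 4) (s δ_K) ^ (-(2α + 4))`, and the angular integral contributes
`θ_M - θ_m`. -/

open MeasureTheory Set Real

lemma integral_rpow_mul_exp_neg_mul_sqrt {q b : ℝ} (hq : -1 < q) (hb : 0 < b) :
    ∫ x in Ioi (0 : ℝ), x ^ q * exp (-b * x ^ (1 / 2 : ℝ))
      = 2 * Gamma (2 * q + 2) * b ^ (-(2 * q + 2)) := by
  rw [integral_rpow_mul_exp_neg_mul_rpow (by norm_num) hq hb]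
  ring_nf

lemma norm_cexp_neg_mul_cpow_half (s : ℝ) (z : ℂ) :
    ‖Complex.exp (-(s : ℂ) * z ^ (1 / 2 : ℂ))‖
      = exp (-(s * cos (Complex.arg z / 2)) * ‖z‖ ^ (1 / 2 : ℝ)) := by
  have h := Complex.cpow_ofReal_re z (1 / 2)
  push_cast at h
  rw [Complex.norm_exp, neg_mul, Complex.neg_re, Complex.re_ofReal_mul, h]
  ring_nf

lemma setIntegral_image_polarCoord_symm {E : Type*} [NormedAddCommGroup E] [NormedSpace ℝ E]
    {R : Set (ℝ × ℝ)} (hR : R ⊆ polarCoord.target) (hRm : MeasurableSet R) (f : ℝ × ℝ → E) :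
    ∫ x in polarCoord.symm '' R, f x = ∫ p in R, p.1 • f (polarCoord.symm p) := by
  rw [integral_image_eq_integral_abs_det_fderiv_smul volume hRm
    (fun p _ ↦ (hasFDerivAt_polarCoord_symm p).hasFDerivWithinAt) (polarCoord.symm.injOn.mono hR)]
  refine setIntegral_congr_fun hRm fun p hp ↦ ?_
  rw [det_fderivPolarCoordSymm, abs_of_pos (hR hp).1]

lemma sector_eq_image_polarCoord_symm (θm θM : ℝ) :
    {x : ℝ × ℝ | ∃ r θ : ℝ, 0 < r ∧ θm < θ ∧ θ < θM ∧ x = (r * cos θ, r * sin θ)}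
      = polarCoord.symm '' (Ioi 0 ×ˢ Ioo θm θM) := by
  ext x
  constructor
  · rintro ⟨r, θ, hr, hθm, hθM, rfl⟩
    exact ⟨(r, θ), ⟨hr, hθm, hθM⟩, rfl⟩
  · rintro ⟨⟨r, θ⟩, ⟨hr, hθm, hθM⟩, rfl⟩
    exact ⟨r, θ, hr, hθm, hθM, rfl⟩

section ProdRestrict

variable {α β E : Type*} [MeasurableSpace α] [MeasurableSpace β] [NormedAddCommGroup E]
  {μ : Measure α} {ν : Measure β} [SFinite μ] [SFinite ν] {s : Set α} {t : Set β}

lemma IntegrableOn.comp_fst_prod [IsFiniteMeasure (ν.restrict t)] {f : α → E}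
    (hf : IntegrableOn f s μ) : IntegrableOn (fun p : α × β ↦ f p.1) (s ×ˢ t) (μ.prod ν) := by
  rw [IntegrableOn, ← Measure.prod_restrict]
  exact hf.comp_fst _

lemma setIntegral_prod_comp_fst [NormedSpace ℝ E] (f : α → E) :
    ∫ p in s ×ˢ t, f p.1 ∂μ.prod ν = ν.real t • ∫ x in s, f x ∂μ := by
  rw [← Measure.prod_restrict, integral_fun_fst, measureReal_restrict_apply_univ]

end ProdRestrict

noncomputable def cgoWeight (s α : ℝ) (x : ℝ × ℝ) : ℝ :=
  ‖Complex.exp (-(s : ℂ) * ((x.1 : ℂ) + (x.2 : ℂ) * Complex.I) ^ (1 / 2 : ℂ))‖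
    * √(x.1 ^ 2 + x.2 ^ 2) ^ α

lemma cgoWeight_nonneg (s α : ℝ) (x : ℝ × ℝ) : 0 ≤ cgoWeight s α x := by
  unfold cgoWeight
  positivity

lemma cgoWeight_polarCoord_symm (s α : ℝ) {r θ : ℝ} (hr : 0 < r) (hθ : θ ∈ Ioc (-π) π) :
    cgoWeight s α (polarCoord.symm (r, θ))
      = r ^ α * exp (-(s * cos (θ / 2)) * r ^ (1 / 2 : ℝ)) := by
  have hz : ((r * cos θ : ℝ) : ℂ) + ((r * sin θ : ℝ) : ℂ) * Complex.I
      = r * (Complex.cos θ + Complex.sin θ * Complex.I) := by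
    push_cast
    ring
  change ‖Complex.exp (-(s : ℂ) * (((r * cos θ : ℝ) : ℂ) + ((r * sin θ : ℝ) : ℂ)
    * Complex.I) ^ (1 / 2 : ℂ))‖ * √((r * cos θ) ^ 2 + (r * sin θ) ^ 2) ^ α = _
  rw [← Complex.norm_add_mul_I, norm_cexp_neg_mul_cpow_half, hz,
    Complex.arg_mul_cos_add_sin_mul_I hr hθ, norm_mul, Complex.norm_cos_add_sin_mul_I,
    Complex.norm_of_nonneg hr.le, mul_one, mul_comm]

lemma mul_cgoWeight_polarCoord_symm_le {s α δ r θ : ℝ} (hs : 0 ≤ s) (hr : 0 < r)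
    (hθ : θ ∈ Ioc (-π) π) (hδ : δ ≤ cos (θ / 2)) :
    r * cgoWeight s α (polarCoord.symm (r, θ))
      ≤ r ^ (α + 1) * exp (-(s * δ) * r ^ (1 / 2 : ℝ)) := by
  rw [cgoWeight_polarCoord_symm s α hr hθ, rpow_add_one hr.ne', mul_comm (r ^ α) r, mul_assoc]
  gcongr

theorem sector_integral_cgo_estimate_general (θm θM : ℝ) (hθm : -Real.pi < θm) (hθM : θM < Real.pi)
    (hlt : 0 < θM - θm)
    (δK : ℝ) (hδK : IsLeast ((fun θ => Real.cos (θ / 2)) '' Set.Icc θm θM) δK)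
    (hδKpos : 0 < δK)
    (s : ℝ) (hs : 0 < s) (α : ℝ) (hα : 0 < α) :
    ∫ x : ℝ × ℝ in {x : ℝ × ℝ | ∃ r θ : ℝ, 0 < r ∧ θm < θ ∧ θ < θM ∧
        x = (r * Real.cos θ, r * Real.sin θ)},
      ‖Complex.exp (-(s : ℂ) * ((x.1 : ℂ) + (x.2 : ℂ) * Complex.I) ^ (1/2 : ℂ))‖
        * Real.sqrt (x.1 ^ 2 + x.2 ^ 2) ^ α
      ≤ 2 * (θM - θm) * Real.Gamma (2 * α + 4) * δK ^ (-(2 * α + 4)) * s ^ (-(2 * α + 4)) := by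
  have hR : Ioi 0 ×ˢ Ioo θm θM ⊆ polarCoord.target :=
    prod_mono_right (Ioo_subset_Ioo hθm.le hθM.le)
  have hb : 0 < s * δK := mul_pos hs hδKpos
  have hbound : ∀ p ∈ Ioi 0 ×ˢ Ioo θm θM, p.1 • cgoWeight s α (polarCoord.symm p)
      ≤ p.1 ^ (α + 1) * exp (-(s * δK) * p.1 ^ (1 / 2 : ℝ)) := by
    rintro ⟨r, θ⟩ ⟨hr, hθm', hθM'⟩
    exact mul_cgoWeight_polarCoord_symm_le hs.le hr ⟨by linarith, by linarith⟩
      (hδK.2 ⟨θ, ⟨hθm'.le, hθM'.le⟩, rfl⟩)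
  change ∫ x in _, cgoWeight s α x ≤ _
  rw [sector_eq_image_polarCoord_symm,
    setIntegral_image_polarCoord_symm hR (measurableSet_Ioi.prod measurableSet_Ioo)]
  calc _ ≤ ∫ p in Ioi 0 ×ˢ Ioo θm θM, p.1 ^ (α + 1) * exp (-(s * δK) * p.1 ^ (1 / 2 : ℝ)) :=
        setIntegral_mono_of_nonneg (fun p hp ↦ smul_nonneg hp.1.le (cgoWeight_nonneg s α _)) hbound
          (IntegrableOn.comp_fst_prod
            (integrableOn_rpow_mul_exp_neg_mul_rpow (by linarith) (by norm_num) hb))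
    _ = (θM - θm) * (2 * Gamma (2 * (α + 1) + 2) * (s * δK) ^ (-(2 * (α + 1) + 2))) := by
        rw [Measure.volume_eq_prod,
          setIntegral_prod_comp_fst fun r : ℝ ↦ r ^ (α + 1) * exp (-(s * δK) * r ^ (1 / 2 : ℝ)),
          integral_rpow_mul_exp_neg_mul_sqrt (by linarith) hb,
          volume_real_Ioo_of_le (sub_pos.mp hlt).le, smul_eq_mul]
    _ = _ := by
        rw [mul_rpow hs.le hδKpos.le]
        ring_nf

/-- the weighted sector integral estimate for the CGO solution:
`∫_K |exp(-s √z)| |x|^α dx ≤ 2 (θ_M - θ_m) Γ(2α+4) δ_K^{-(2α+4)} s^{-(2α+4)}`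
where `δ_K = min_{θ_m ≤ θ ≤ θ_M} cos(θ/2) > 0`. -/
theorem sector_integral_cgo_estimate (θm θM : ℝ) (hθm : -Real.pi < θm) (hθM : θM < Real.pi)
    (hlt : 0 < θM - θm) (hopen : θM - θm < Real.pi)
    (δK : ℝ) (hδK : IsLeast ((fun θ => Real.cos (θ / 2)) '' Set.Icc θm θM) δK)
    (hδKpos : 0 < δK)
    (s : ℝ) (hs : 0 < s) (h : ℝ) (hh : 0 < h) (α : ℝ) (hα : 0 < α) :
    ∫ x : ℝ × ℝ in {x : ℝ × ℝ | ∃ r θ : ℝ, 0 < r ∧ θm < θ ∧ θ < θM ∧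
        x = (r * Real.cos θ, r * Real.sin θ)},
      ‖Complex.exp (-(s : ℂ) * ((x.1 : ℂ) + (x.2 : ℂ) * Complex.I) ^ (1/2 : ℂ))‖
        * Real.sqrt (x.1 ^ 2 + x.2 ^ 2) ^ α
      ≤ 2 * (θM - θm) * Real.Gamma (2 * α + 4) * δK ^ (-(2 * α + 4)) * s ^ (-(2 * α + 4)) :=
  sector_integral_cgo_estimate_general θm θM hθm hθM hlt δK hδK hδKpos s hs α hα
end

section
/- Let −π < θ_m < θ_M < π with 0 < θ_M − θ_m < π, let K = {(r cos θ, r sin θ) ∈ ℝ² : r > 0, θ_m < θ < θ_M}, and for h > 0 let C_h = K ∩ B_h(0) be the truncated sector, where B_h(0) is the open disk of radius h centered at the origin. Let u₀(x) = (exp(−s√z), i exp(−s√z)) ∈ ℂ² with z = x₁ + i x₂ (principal square root). Then for every α > 0 and s > 0, ( ∫_{C_h} |x|^{2α} ‖u₀(x)‖² dx )^{1/2} ≤ s^{−2(α+1)} · 2 √( (θ_M − θ_m) Γ(4α + 4) ) / (2 δ_K)^{2α+2}, where ‖·‖ is the Euclidean norm on ℂ² and δ_K = min_{θ_m ≤ θ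 ≤ θ_M} cos(θ/2). -/
/-! On the sector, `Re √z = √|x| cos (θ/2) ≥ δ_K √|x|`, so the integrand is bounded by the
radial function `2 |x|^{2α} exp (-2 s δ_K √|x|)`. Forgetting the truncation and integrating this
majorant in polar coordinates gives `(θ_M - θ_m) · 4 Γ(4α + 4) (2 s δ_K)^{-(4α + 4)}`, by the
substitution `r = t²` in the radial Gamma integral; its square root is the bound. -/

open MeasureTheory Set Real

def polarSector (θm θM : ℝ) : Set (ℝ × ℝ) :=
  {x | ∃ r θ : ℝ, 0 < r ∧ θm < θ ∧ θ < θM ∧ x = (r * cos θ, r * sin θ)}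

lemma polarSector_eq_image (θm θM : ℝ) :
    polarSector θm θM = polarCoord.symm '' (Ioi 0 ×ˢ Ioo θm θM) := by
  ext x
  constructor
  · rintro ⟨r, θ, hr, h1, h2, rfl⟩
    exact ⟨(r, θ), ⟨hr, h1, h2⟩, rfl⟩
  · rintro ⟨⟨r, θ⟩, ⟨hr, h1, h2⟩, rfl⟩
    exact ⟨r, θ, hr, h1, h2, rfl⟩

lemma sqrt_sq_add_sq_polarCoord_symm (p : ℝ × ℝ) :
    √((polarCoord.symm p).1 ^ 2 + (polarCoord.symm p).2 ^ 2) = |p.1| := by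
  simp only [polarCoord_symm_apply, mul_pow, ← mul_add, cos_sq_add_sin_sq, mul_one,
    sqrt_sq_eq_abs]

section Sector

variable {θm θM : ℝ}

lemma Ioi_prod_Ioo_subset_polarCoord_target (hθm : -π ≤ θm) (hθM : θM ≤ π) :
    Ioi 0 ×ˢ Ioo θm θM ⊆ polarCoord.target :=
  prod_mono_right (Ioo_subset_Ioo hθm hθM)

lemma isOpen_polarSector (hθm : -π ≤ θm) (hθM : θM ≤ π) :
    IsOpen (polarSector θm θM) := by
  rw [polarSector_eq_image]
  exact polarCoord.symm.isOpen_image_of_subset_source (isOpen_Ioi.prod isOpen_Ioo)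
    (Ioi_prod_Ioo_subset_polarCoord_target hθm hθM)

lemma injOn_polarCoord_symm_Ioi_prod_Ioo (hθm : -π ≤ θm) (hθM : θM ≤ π) :
    InjOn polarCoord.symm (Ioi 0 ×ˢ Ioo θm θM) :=
  polarCoord.symm.injOn.mono (Ioi_prod_Ioo_subset_polarCoord_target hθm hθM)

variable {E : Type*} [NormedAddCommGroup E] [NormedSpace ℝ E]

lemma integrableOn_polarSector_iff (hθm : -π ≤ θm) (hθM : θM ≤ π) (f : ℝ × ℝ → E) :
    IntegrableOn f (polarSector θm θM) ↔
      IntegrableOn (fun p ↦ p.1 • f (polarCoord.symm p)) (Ioi 0 ×ˢ Ioo θm θM) := by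
  rw [polarSector_eq_image, integrableOn_image_iff_integrableOn_abs_det_fderiv_smul volume
    (measurableSet_Ioi.prod measurableSet_Ioo)
    (fun p _ ↦ (hasFDerivAt_polarCoord_symm p).hasFDerivWithinAt)
    (injOn_polarCoord_symm_Ioi_prod_Ioo hθm hθM)]
  refine integrableOn_congr_fun (fun p hp ↦ ?_) (measurableSet_Ioi.prod measurableSet_Ioo)
  rw [det_fderivPolarCoordSymm, abs_of_pos hp.1]

lemma integral_polarSector (hθm : -π ≤ θm) (hθM : θM ≤ π) (f : ℝ × ℝ → E) :
    ∫ x in polarSector θm θM, f x =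
      ∫ p in Ioi 0 ×ˢ Ioo θm θM, p.1 • f (polarCoord.symm p) := by
  rw [polarSector_eq_image, integral_image_eq_integral_abs_det_fderiv_smul volume
    (measurableSet_Ioi.prod measurableSet_Ioo)
    (fun p _ ↦ (hasFDerivAt_polarCoord_symm p).hasFDerivWithinAt)
    (injOn_polarCoord_symm_Ioi_prod_Ioo hθm hθM)]
  refine setIntegral_congr_fun (measurableSet_Ioi.prod measurableSet_Ioo) (fun p hp ↦ ?_)
  rw [det_fderivPolarCoordSymm, abs_of_pos hp.1]

lemma IntegrableOn.polarSector_radial (hθm : -π ≤ θm) (hθM : θM ≤ π) {g : ℝ → ℝ}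
    (hg : IntegrableOn (fun r ↦ r * g r) (Ioi 0)) :
    IntegrableOn (fun x : ℝ × ℝ ↦ g √(x.1 ^ 2 + x.2 ^ 2)) (polarSector θm θM) := by
  rw [integrableOn_polarSector_iff hθm hθM]
  have hprod : IntegrableOn (fun p : ℝ × ℝ ↦ p.1 * g p.1 * 1) (Ioi 0 ×ˢ Ioo θm θM) := by
    rw [IntegrableOn, Measure.volume_eq_prod, ← Measure.prod_restrict]
    exact hg.mul_prod (integrableOn_const measure_Ioo_lt_top.ne)
  refine hprod.congr_fun (fun p (hp : 0 < p.1 ∧ _) ↦ ?_)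
    (measurableSet_Ioi.prod measurableSet_Ioo)
  simp only [mul_one, smul_eq_mul, sqrt_sq_add_sq_polarCoord_symm, abs_of_pos hp.1]

lemma integral_polarSector_radial (hθm : -π ≤ θm) (hθM : θM ≤ π) (hθ : θm ≤ θM)
    (g : ℝ → ℝ) :
    ∫ x in polarSector θm θM, g √(x.1 ^ 2 + x.2 ^ 2) =
      (θM - θm) * ∫ r in Ioi 0, r * g r := by
  rw [integral_polarSector hθm hθM]
  calc _ = ∫ p in Ioi 0 ×ˢ Ioo θm θM, p.1 * g p.1 * 1 := by
        refine setIntegral_congr_fun (measurableSet_Ioi.prod measurableSet_Ioo) (fun p hp ↦ ?_)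
        rw [smul_eq_mul, sqrt_sq_add_sq_polarCoord_symm, abs_of_pos hp.1, mul_one]
    _ = (θM - θm) * ∫ r in Ioi 0, r * g r := by
        rw [Measure.volume_eq_prod, setIntegral_prod_mul (fun r ↦ r * g r) (fun _ ↦ 1),
          setIntegral_const, Real.volume_real_Ioo_of_le hθ, smul_eq_mul, mul_one, mul_comm]

end Sector

lemma integral_Ioi_mul_rpow_mul_exp_neg_mul_sqrt {a c : ℝ} (ha : -2 < a) (hc : 0 < c) :
    ∫ r in Ioi 0, r * (r ^ a * exp (-c * √r)) =
      2 * Gamma (2 * a + 4) * c ^ (-(2 * a + 4)) := by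
  have hsub : EqOn (fun r ↦ r * (r ^ a * exp (-c * √r)))
      (fun r ↦ r ^ (a + 1) * exp (-c * r ^ (1 / 2 : ℝ))) (Ioi 0) := fun r (hr : 0 < r) ↦ by
    dsimp only
    rw [rpow_add_one hr.ne', sqrt_eq_rpow]
    ring
  rw [setIntegral_congr_fun measurableSet_Ioi hsub,
    integral_rpow_mul_exp_neg_mul_rpow one_half_pos (by linarith) hc]
  ring_nf

lemma integrableOn_Ioi_mul_rpow_mul_exp_neg_mul_sqrt {a c : ℝ} (ha : -2 < a) (hc : 0 < c) :
    IntegrableOn (fun r ↦ r * (r ^ a * exp (-c * √r))) (Ioi 0) := by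
  -- a non-integrable function would have integral `0`
  refine Integrable.of_integral_ne_zero ?_
  rw [integral_Ioi_mul_rpow_mul_exp_neg_mul_sqrt ha hc]
  have := Gamma_pos_of_pos (show 0 < 2 * a + 4 by linarith)
  positivity

lemma norm_exp_sq_add_norm_I_mul_exp_sq (w : ℂ) :
    ‖Complex.exp w‖ ^ 2 + ‖Complex.I * Complex.exp w‖ ^ 2 = 2 * exp (2 * w.re) := by
  rw [norm_mul, Complex.norm_I, one_mul, Complex.norm_exp, ← exp_nat_mul]
  push_cast
  ring

lemma re_cpow_half_polar {r θ : ℝ} (hr : 0 ≤ r) (hθ₁ : -π ≤ θ) (hθ₂ : θ ≤ π) :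
    ((((r * cos θ : ℝ) : ℂ) + ((r * sin θ : ℝ) : ℂ) * Complex.I) ^ (1 / 2 : ℂ)).re =
      √r * cos (θ / 2) := by
  rw [one_div, Complex.cpow_inv_two_re, Complex.norm_def, Complex.normSq_add_mul_I,
    Complex.add_re, Complex.ofReal_re, Complex.re_ofReal_mul, Complex.I_re, mul_zero, add_zero,
    cos_half hθ₁ hθ₂, ← sqrt_mul hr, mul_pow, mul_pow, ← mul_add, cos_sq_add_sin_sq, mul_one,
    sqrt_sq hr]
  ring_nf

lemma sqrt_four_mul_mul_rpow_neg {A s d : ℝ} (hA : 0 ≤ A) (hs : 0 < s) (hd : 0 < d) (b : ℝ) :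
    √(4 * A * (s * d) ^ (-(2 * b))) = s ^ (-b) * (2 * √A) / d ^ b := by
  have hsq : (s * d) ^ (-(2 * b)) = ((s * d) ^ (-b)) ^ 2 := by
    rw [← rpow_natCast, ← rpow_mul (by positivity)]
    ring_nf
  rw [hsq, show 4 * A * ((s * d) ^ (-b)) ^ 2 = A * (2 * (s * d) ^ (-b)) ^ 2 by ring,
    sqrt_mul hA, sqrt_sq (by positivity), mul_rpow hs.le hd.le, rpow_neg hd.le]
  ring

lemma setIntegral_le_setIntegral_of_subset {α : Type*} [MeasurableSpace α] {μ : Measure α}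
    {f g : α → ℝ} {s t : Set α} (hs : MeasurableSet s) (hst : s ⊆ t)
    (hf : ∀ x ∈ s, 0 ≤ f x) (hfg : ∀ x ∈ s, f x ≤ g x)
    (hg : IntegrableOn g t μ) (hg₀ : 0 ≤ᵐ[μ.restrict t] g) :
    ∫ x in s, f x ∂μ ≤ ∫ x in t, g x ∂μ :=
  (integral_mono_of_nonneg (ae_restrict_of_forall_mem hs hf) (hg.mono_set hst)
    (ae_restrict_of_forall_mem hs hfg)).trans
    (setIntegral_mono_set hg hg₀ (Filter.Eventually.of_forall hst))

noncomputable def cgoNormSq (s : ℝ) (x : ℝ × ℝ) : ℝ :=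
  ‖Complex.exp (-(s : ℂ) * ((x.1 : ℂ) + (x.2 : ℂ) * Complex.I) ^ (1/2 : ℂ))‖ ^ 2 +
    ‖Complex.I * Complex.exp (-(s : ℂ) * ((x.1 : ℂ) + (x.2 : ℂ) * Complex.I) ^ (1/2 : ℂ))‖ ^ 2

lemma cgoNormSq_polar (s : ℝ) {r θ : ℝ} (hr : 0 ≤ r) (hθ₁ : -π ≤ θ) (hθ₂ : θ ≤ π) :
    cgoNormSq s (r * cos θ, r * sin θ) = 2 * exp (-(2 * s) * (√r * cos (θ / 2))) := by
  rw [cgoNormSq, norm_exp_sq_add_norm_I_mul_exp_sq, neg_mul, Complex.neg_re,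
    Complex.re_ofReal_mul, re_cpow_half_polar hr hθ₁ hθ₂]
  ring_nf

lemma cgoNormSq_le_of_mem_polarSector {θm θM s δ : ℝ} (hθm : -π ≤ θm) (hθM : θM ≤ π)
    (hs : 0 ≤ s) (hδ : ∀ θ ∈ Ioo θm θM, δ ≤ cos (θ / 2)) {x : ℝ × ℝ}
    (hx : x ∈ polarSector θm θM) :
    cgoNormSq s x ≤ 2 * exp (-(2 * s * δ) * √√(x.1 ^ 2 + x.2 ^ 2)) := by
  obtain ⟨r, θ, hr, hθ₁, hθ₂, rfl⟩ := hx
  have hnorm := sqrt_sq_add_sq_polarCoord_symm (r, θ)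
  simp only [polarCoord_symm_apply, abs_of_pos hr] at hnorm
  rw [cgoNormSq_polar s hr.le (by linarith) (by linarith), hnorm]
  gcongr 2 * exp ?_
  have := mul_le_mul_of_nonneg_left (hδ θ ⟨hθ₁, hθ₂⟩) (by positivity : 0 ≤ 2 * s * √r)
  linarith

theorem truncated_sector_L2_estimate_general (θm θM : ℝ) (hθm : -Real.pi < θm) (hθM : θM < Real.pi)
    (hlt : 0 < θM - θm)
    (δK : ℝ) (hδK : IsLeast ((fun θ => Real.cos (θ / 2)) '' Set.Icc θm θM) δK)
    (hδKpos : 0 < δK)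
    (h : ℝ) (α : ℝ) (hα : 0 < α) (s : ℝ) (hs : 0 < s) :
    Real.sqrt (∫ x : ℝ × ℝ in
        {x : ℝ × ℝ | ∃ r θ : ℝ, 0 < r ∧ θm < θ ∧ θ < θM ∧
          x = (r * Real.cos θ, r * Real.sin θ)} ∩
        {x : ℝ × ℝ | Real.sqrt (x.1 ^ 2 + x.2 ^ 2) < h},
        Real.sqrt (x.1 ^ 2 + x.2 ^ 2) ^ (2 * α) *
          (‖Complex.exp
              (-(s : ℂ) * ((x.1 : ℂ) + (x.2 : ℂ) * Complex.I) ^ (1/2 : ℂ))‖ ^ 2 +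
           ‖Complex.I * Complex.exp
              (-(s : ℂ) * ((x.1 : ℂ) + (x.2 : ℂ) * Complex.I) ^ (1/2 : ℂ))‖ ^ 2))
      ≤ s ^ (-(2 * (α + 1))) * (2 * Real.sqrt ((θM - θm) * Real.Gamma (4 * α + 4))) /
          (2 * δK) ^ (2 * α + 2) := by
  change √(∫ x in polarSector θm θM ∩ {x | √(x.1 ^ 2 + x.2 ^ 2) < h},
    √(x.1 ^ 2 + x.2 ^ 2) ^ (2 * α) * cgoNormSq s x) ≤ _
  have hc : 0 < 2 * s * δK := by positivity
  set g : ℝ → ℝ := fun r ↦ r ^ (2 * α) * exp (-(2 * s * δK) * √r)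
  have hS : MeasurableSet (polarSector θm θM ∩ {x : ℝ × ℝ | √(x.1 ^ 2 + x.2 ^ 2) < h}) :=
    ((isOpen_polarSector hθm.le hθM.le).inter
      (isOpen_lt (by fun_prop) continuous_const)).measurableSet
  have hg : IntegrableOn (fun x : ℝ × ℝ ↦ 2 * g √(x.1 ^ 2 + x.2 ^ 2)) (polarSector θm θM) :=
    (IntegrableOn.polarSector_radial hθm.le hθM.le
      (integrableOn_Ioi_mul_rpow_mul_exp_neg_mul_sqrt (by linarith) hc)).const_mul 2
  have hδ : ∀ θ ∈ Ioo θm θM, δK ≤ cos (θ / 2) :=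
    fun θ hθ ↦ hδK.2 (mem_image_of_mem _ (Ioo_subset_Icc_self hθ))
  calc _ ≤ √(∫ x in polarSector θm θM, 2 * g √(x.1 ^ 2 + x.2 ^ 2)) := by
        refine sqrt_le_sqrt (setIntegral_le_setIntegral_of_subset hS inter_subset_left
          (fun x _ ↦ by unfold cgoNormSq; positivity) (fun x hx ↦ ?_) hg
          (ae_of_all _ fun x ↦ by positivity))
        rw [mul_left_comm]
        exact mul_le_mul_of_nonneg_left
          (cgoNormSq_le_of_mem_polarSector hθm.le hθM.le hs.le hδ hx.1) (by positivity)
    _ = √(4 * ((θM - θm) * Gamma (4 * α + 4)) *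
          (s * (2 * δK)) ^ (-(2 * (2 * α + 2)))) := by
        rw [integral_const_mul, integral_polarSector_radial hθm.le hθM.le (by linarith),
          integral_Ioi_mul_rpow_mul_exp_neg_mul_sqrt (by linarith) hc]
        ring_nf
    _ = _ := by
        rw [sqrt_four_mul_mul_rpow_neg (by positivity) hs (by positivity)]
        ring_nf

/-- the weighted `L²` estimate on the truncated sector
`C_h = K ∩ B_h(0)` for the CGO solution `u₀ = (exp(-s√z), i exp(-s√z))`:
`(∫_{C_h} |x|^{2α} ‖u₀‖² dx)^{1/2} ≤ s^{-2(α+1)} · 2√((θ_M-θ_m) Γ(4α+4)) / (2δ_K)^{2α+2}`. -/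
theorem truncated_sector_L2_estimate (θm θM : ℝ) (hθm : -Real.pi < θm) (hθM : θM < Real.pi)
    (hlt : 0 < θM - θm) (hopen : θM - θm < Real.pi)
    (δK : ℝ) (hδK : IsLeast ((fun θ => Real.cos (θ / 2)) '' Set.Icc θm θM) δK)
    (hδKpos : 0 < δK)
    (h : ℝ) (hh : 0 < h) (α : ℝ) (hα : 0 < α) (s : ℝ) (hs : 0 < s) :
    Real.sqrt (∫ x : ℝ × ℝ in
        {x : ℝ × ℝ | ∃ r θ : ℝ, 0 < r ∧ θm < θ ∧ θ < θM ∧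
          x = (r * Real.cos θ, r * Real.sin θ)} ∩
        {x : ℝ × ℝ | Real.sqrt (x.1 ^ 2 + x.2 ^ 2) < h},
        Real.sqrt (x.1 ^ 2 + x.2 ^ 2) ^ (2 * α) *
          (‖Complex.exp
              (-(s : ℂ) * ((x.1 : ℂ) + (x.2 : ℂ) * Complex.I) ^ (1/2 : ℂ))‖ ^ 2 +
           ‖Complex.I * Complex.exp
              (-(s : ℂ) * ((x.1 : ℂ) + (x.2 : ℂ) * Complex.I) ^ (1/2 : ℂ))‖ ^ 2))
      ≤ s ^ (-(2 * (α + 1))) * (2 * Real.sqrt ((θM - θm) * Real.Gamma (4 * α + 4))) /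
          (2 * δK) ^ (2 * α + 2) :=
  truncated_sector_L2_estimate_general θm θM hθm hθM hlt δK hδK hδKpos h α hα s hs
end
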